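/- Let k, n, m ≥ 2 with n < m and n, m coprime. The quotient of the toric reflection group W(k,n,m) by the normal subgroup generated by c = (x₁x₂⋯xₙ)^m is isomorphic to the alternating subgroup W⁺_{k,n,m} = ⟨a, b | a^k = b^n = (ba⁻¹)^m = 1⟩, via the map sending xᵢ to b^{-i+1} a b^{i-1}. -/

import Mathlib

/-- The word `x_i x_{i+1} ⋯ x_{i+l-1}` (with `l` factors, indices mod `n`) in the free
group on `ZMod n`. -/
def wWord (n l : ℕ) (i : ZMod n) : FreeGroup (ZMod n) :=
  ((List.range l).map fun j => FreeGroup.of (i + (j : ZMod n))).prod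

/-- The relations of the toric reflection group `W(k,n,m)`: `xᵢ^k = 1` for all `i`, and all
the `m`-factor products `x_i x_{i+1} ⋯ x_{i+m-1}` (indices mod `n`) are equal. -/
def wRels (k n m : ℕ) : Set (FreeGroup (ZMod n)) :=
  (Set.range fun i : ZMod n => FreeGroup.of i ^ k) ∪
  (Set.range fun i : ZMod n => wWord n m 1 * (wWord n m i)⁻¹)

/-- The toric reflection group `W(k,n,m)`. -/
abbrev TorGroup (k n m : ℕ) := PresentedGroup (wRels k n m)

/-- The generator `xᵢ` of `W(k,n,m)`, for `i : ZMod n`. -/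
def tx (k n m : ℕ) (i : ZMod n) : TorGroup k n m := PresentedGroup.of i

/-- The product `x_i x_{i+1} ⋯ x_{i+l-1}` (with `l` factors, indices mod `n`) in
`W(k,n,m)`. -/
def txProd (k n m : ℕ) (l : ℕ) (i : ZMod n) : TorGroup k n m :=
  ((List.range l).map fun j => tx k n m (i + (j : ZMod n))).prod

/-- The relations of the von Dyck-type group `⟨a, b | a^k = b^n = (ba⁻¹)^m = 1⟩`. -/
def vdRels (k n m : ℕ) : Set (FreeGroup (Fin 2)) :=
  { FreeGroup.of 0 ^ k, FreeGroup.of 1 ^ n,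
    (FreeGroup.of 1 * (FreeGroup.of 0)⁻¹) ^ m }

/-- The group `W⁺_{k,n,m} = ⟨a, b | a^k = b^n = (ba⁻¹)^m = 1⟩`, the alternating subgroup
of the triangle Coxeter group with labels `k, n, m`. -/
abbrev VonDyck (k n m : ℕ) := PresentedGroup (vdRels k n m)

/-- The generator `a` of `W⁺_{k,n,m}`. -/
def vA (k n m : ℕ) : VonDyck k n m := PresentedGroup.of 0
/-- The generator `b` of `W⁺_{k,n,m}`. -/
def vB (k n m : ℕ) : VonDyck k n m := PresentedGroup.of 1

/-!
Write `δ = x₁ ⋯ x_m`. Since all `m`-fold cyclic products agree, `xᵢ δ = δ x_{i+m}`, and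
`c = (x₁ ⋯ xₙ)^m = δⁿ`. In the quotient by `c`, with `n A + m B = 1`, the element `b = δ^B`
satisfies `bⁿ = 1`, `b^m = δ` and `xᵢ b = b x_{i+1}`; hence `x_{i+1} = b^{-i} x₁ b^i`, and
`δ = x₁ ⋯ x_m = (x₁ b⁻¹)^m b^m` gives `(x₁ b⁻¹)^m = 1`. So `a ↦ x₁`, `b ↦ δ^B` is a
homomorphism `W⁺_{k,n,m} → W(k,n,m)/⟨c⟩`. Conversely, under `xᵢ ↦ b^{1-i} a b^{i-1}` the
product `x_i ⋯ x_{i+m-1}` telescopes to `b^{1-i} (a b⁻¹)^m b^{i-1} b^m = b^m`, so the relations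
hold and `c = δⁿ ↦ b^{mn} = 1`. The two maps are mutually inverse on generators.
-/

section ShiftedFamily

variable {G A : Type*} [Group G]

theorem zpow_eq_zpow_of_intCast_eq {n : ℕ} {g : G} (hg : g ^ n = 1) {s t : ℤ}
    (h : (s : ZMod n) = t) : g ^ s = g ^ t :=
  zpow_eq_zpow_iff_modEq.mpr <| ((ZMod.intCast_eq_intCast_iff _ _ _).mp h).of_dvd <|
    Int.natCast_dvd_natCast.mpr (orderOf_dvd_of_pow_eq_one hg)

variable {f : A → G} {g : G}

theorem mul_pow_eq_pow_mul_of_shift [AddMonoid A] {s : A} (h : ∀ i, f i * g = g * f (i + s))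
    (l : ℕ) (i : A) : f i * g ^ l = g ^ l * f (i + l • s) := by
  induction l generalizing i with
  | zero => simp
  | succ l ih =>
    rw [pow_succ, ← mul_assoc, ih, mul_assoc, h, ← mul_assoc, ← pow_succ, succ_nsmul, add_assoc]

theorem mul_zpow_eq_zpow_mul_of_shift [AddGroup A] {s : A} (h : ∀ i, f i * g = g * f (i + s))
    (t : ℤ) (i : A) : f i * g ^ t = g ^ t * f (i + t • s) := by
  obtain ⟨l, rfl | rfl⟩ := t.eq_nat_or_neg
  · simpa using mul_pow_eq_pow_mul_of_shift h l i
  · have hl := mul_pow_eq_pow_mul_of_shift h l (i - l • s)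
    rw [sub_add_cancel] at hl
    rw [zpow_neg, zpow_natCast, neg_zsmul, natCast_zsmul, ← sub_eq_add_neg, eq_inv_mul_iff_mul_eq,
      ← mul_assoc, ← hl, mul_inv_cancel_right]

theorem zpow_neg_mul_mul_zpow_of_shift [AddGroup A] {s : A} (h : ∀ i, f i * g = g * f (i + s))
    (t : ℤ) (i : A) : g ^ (-t) * f i * g ^ t = f (i + t • s) := by
  rw [mul_assoc, mul_zpow_eq_zpow_mul_of_shift h, zpow_neg, inv_mul_cancel_left]

theorem list_prod_map_range_of_shift [AddGroupWithOne A] (h : ∀ i, f i * g = g * f (i + 1))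
    (l : ℕ) (i : A) :
    ((List.range l).map fun j : ℕ => f (i + j)).prod = (f i * g⁻¹) ^ l * g ^ l := by
  induction l with
  | zero => simp
  | succ l ih =>
    have hl : g ^ l * f (i + l) = f i * g ^ l := by
      simpa using (mul_pow_eq_pow_mul_of_shift h l i).symm
    rw [List.range_succ, List.map_append, List.prod_append, ih, List.map_singleton,
      List.prod_singleton, mul_assoc, hl, pow_succ, pow_succ]
    group

end ShiftedFamily

theorem Nat.Coprime.intCast_gcdB_mul_eq_one {n m : ℕ} (hco : n.Coprime m) :
    ((Nat.gcdB n m : ℤ) : ZMod n) * m = 1 := by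
  have h := congrArg (Int.cast : ℤ → ZMod n) (Nat.gcd_eq_gcd_ab n m)
  rw [hco.gcd_eq_one] at h
  push_cast [ZMod.natCast_self] at h
  rw [h, zero_mul, zero_add, mul_comm]

section ToricGroup

variable {k n m : ℕ}

theorem txProd_eq_list_prod (l : ℕ) (i : ZMod n) :
    txProd k n m l i = ((List.range l).map fun j : ℕ => tx k n m (i + j)).prod := by
  simp only [txProd, List.pure_def, List.bind_eq_flatMap, ← List.map_eq_flatMap, List.map_map,
    Function.comp_def]

theorem wWord_eq_list_prod (l : ℕ) (i : ZMod n) :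
    wWord n l i = ((List.range l).map fun j : ℕ => FreeGroup.of (i + j)).prod := by
  simp only [wWord, List.pure_def, List.bind_eq_flatMap, ← List.map_eq_flatMap, List.map_map,
    Function.comp_def]

theorem mk_wWord (l : ℕ) (i : ZMod n) :
    PresentedGroup.mk (wRels k n m) (wWord n l i) = txProd k n m l i := by
  rw [wWord_eq_list_prod, map_list_prod, List.map_map, txProd_eq_list_prod]
  rfl

theorem tx_pow_eq_one (i : ZMod n) : tx k n m i ^ k = 1 := by
  have h := PresentedGroup.one_of_mem (rels := wRels k n m) (Or.inl ⟨i, rfl⟩)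
  rwa [map_pow] at h

theorem txProd_eq_txProd_one (i : ZMod n) : txProd k n m m i = txProd k n m m 1 := by
  rw [← mk_wWord, ← mk_wWord]
  exact (PresentedGroup.mk_eq_mk_of_mul_inv_mem (Or.inr ⟨i, rfl⟩)).symm

theorem txProd_add (a b : ℕ) (i : ZMod n) :
    txProd k n m (a + b) i = txProd k n m a i * txProd k n m b (i + a) := by
  simp only [txProd_eq_list_prod, List.range_add, List.map_append, List.prod_append,
    List.map_map, Function.comp_def, Nat.cast_add, add_assoc]

theorem txProd_one (i : ZMod n) : txProd k n m 1 i = tx k n m i := by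
  simp [txProd_eq_list_prod]

theorem tx_mul_txProd (i : ZMod n) :
    tx k n m i * txProd k n m m 1 = txProd k n m m 1 * tx k n m (i + m) := by
  have h := txProd_add (k := k) (m := m) 1 m i
  rw [add_comm, txProd_add, txProd_one, txProd_one, Nat.cast_one, txProd_eq_txProd_one (i + 1),
    txProd_eq_txProd_one i] at h
  exact h.symm

theorem txProd_mul_eq_pow {p : ℕ} {i : ZMod n}
    (h : ∀ l : ℕ, txProd k n m p (i + (l * p : ℕ)) = txProd k n m p i) (l : ℕ) :
    txProd k n m (l * p) i = txProd k n m p i ^ l := by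
  induction l with
  | zero => simp [txProd_eq_list_prod]
  | succ l ih => rw [Nat.succ_mul, txProd_add, ih, h, pow_succ]

theorem txProd_pow_eq_txProd_pow :
    txProd k n m n 1 ^ m = txProd k n m m 1 ^ n := by
  rw [← txProd_mul_eq_pow (fun l => by simp),
    ← txProd_mul_eq_pow (fun _ => txProd_eq_txProd_one _), mul_comm]

end ToricGroup

section VonDyck

variable {k n m : ℕ}

theorem vA_pow_eq_one : vA k n m ^ k = 1 := by
  have h := PresentedGroup.one_of_mem (rels := vdRels k n m) (Set.mem_insert _ _)
  rwa [map_pow] at h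

theorem vB_pow_eq_one : vB k n m ^ n = 1 := by
  have h := PresentedGroup.one_of_mem (rels := vdRels k n m)
    (Set.mem_insert_of_mem _ (Set.mem_insert _ _))
  rwa [map_pow] at h

theorem vA_mul_vB_inv_pow_eq_one : (vA k n m * (vB k n m)⁻¹) ^ m = 1 := by
  have h := PresentedGroup.one_of_mem (rels := vdRels k n m)
    (Set.mem_insert_of_mem _ (Set.mem_insert_of_mem _ rfl))
  rw [map_pow, map_mul, map_inv] at h
  rw [← inv_inv (vA k n m * _), mul_inv_rev, inv_inv, inv_pow]
  exact inv_eq_one.mpr h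

/-- The image `b^{1-i} a b^{i-1}` of `xᵢ`, with `i - 1` lifted to `ℤ` by `ZMod.cast`; since
`bⁿ = 1` any other lift gives the same element (`vX_eq_of_intCast_eq`). -/
def vX (k n m : ℕ) (i : ZMod n) : VonDyck k n m :=
  vB k n m ^ (-((i - 1).cast : ℤ)) * vA k n m * vB k n m ^ ((i - 1).cast : ℤ)

theorem vX_eq_of_intCast_eq {i : ZMod n} {t : ℤ} (ht : (t : ZMod n) = i - 1) :
    vX k n m i = vB k n m ^ (-t) * vA k n m * vB k n m ^ t := by
  have hcast : (((i - 1).cast : ℤ) : ZMod n) = t := by rw [ZMod.intCast_zmod_cast, ht]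
  have hcast_neg : ((-(i - 1).cast : ℤ) : ZMod n) = ((-t : ℤ) : ZMod n) := by
    rw [Int.cast_neg, Int.cast_neg, hcast]
  rw [vX, zpow_eq_zpow_of_intCast_eq vB_pow_eq_one hcast,
    zpow_eq_zpow_of_intCast_eq vB_pow_eq_one hcast_neg]

theorem vX_one : vX k n m 1 = vA k n m := by
  rw [vX_eq_of_intCast_eq (t := 0) (by simp)]
  simp

theorem vX_mul_vB (i : ZMod n) : vX k n m i * vB k n m = vB k n m * vX k n m (i + 1) := by
  rw [vX_eq_of_intCast_eq (ZMod.intCast_zmod_cast (i - 1)),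
    vX_eq_of_intCast_eq (t := (i - 1).cast + 1) (by push_cast [ZMod.intCast_zmod_cast]; ring)]
  group

theorem vX_eq_conj (i : ZMod n) :
    vX k n m i = MulAut.conj (vB k n m ^ (-((i - 1).cast : ℤ))) (vA k n m) := by
  rw [vX, MulAut.conj_apply, ← zpow_neg, neg_neg]

theorem vX_pow_eq_one (i : ZMod n) : vX k n m i ^ k = 1 := by
  rw [vX_eq_conj, ← map_pow, vA_pow_eq_one, map_one]

theorem list_prod_map_range_vX (i : ZMod n) :
    ((List.range m).map fun j : ℕ => vX k n m (i + j)).prod = vB k n m ^ m := by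
  have hconj : vX k n m i * (vB k n m)⁻¹ =
      MulAut.conj (vB k n m ^ (-((i - 1).cast : ℤ))) (vA k n m * (vB k n m)⁻¹) := by
    rw [vX, MulAut.conj_apply]
    group
  rw [list_prod_map_range_of_shift vX_mul_vB, hconj, ← map_pow, vA_mul_vB_inv_pow_eq_one,
    map_one, one_mul]

theorem lift_vX_eq_one_of_mem_wRels : ∀ r ∈ wRels k n m, FreeGroup.lift (vX k n m) r = 1 := by
  rintro r (⟨i, rfl⟩ | ⟨i, rfl⟩)
  · rw [map_pow, FreeGroup.lift_apply_of, vX_pow_eq_one]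
  · simp only [wWord_eq_list_prod, map_mul, map_inv, map_list_prod, List.map_map,
      Function.comp_def, FreeGroup.lift_apply_of]
    rw [list_prod_map_range_vX, list_prod_map_range_vX, mul_inv_cancel]

end VonDyck

section Quotient

variable {k n m : ℕ}

abbrev TorQuot (k n m : ℕ) := TorGroup k n m ⧸ Subgroup.normalClosure {txProd k n m n 1 ^ m}

def torToVonDyck (k n m : ℕ) : TorGroup k n m →* VonDyck k n m :=
  PresentedGroup.toGroup lift_vX_eq_one_of_mem_wRels

theorem torToVonDyck_tx (i : ZMod n) : torToVonDyck k n m (tx k n m i) = vX k n m i :=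
  PresentedGroup.toGroup.of _

theorem torToVonDyck_txProd (i : ZMod n) :
    torToVonDyck k n m (txProd k n m m i) = vB k n m ^ m := by
  rw [txProd_eq_list_prod, map_list_prod, List.map_map, ← list_prod_map_range_vX i]
  simp only [Function.comp_def, torToVonDyck_tx]

theorem torToVonDyck_central : torToVonDyck k n m (txProd k n m n 1 ^ m) = 1 := by
  rw [txProd_pow_eq_txProd_pow, map_pow, torToVonDyck_txProd, ← pow_mul, mul_comm, pow_mul,
    vB_pow_eq_one, one_pow]

def torQuotToVonDyck (k n m : ℕ) : TorQuot k n m →* VonDyck k n m :=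
  QuotientGroup.lift _ (torToVonDyck k n m) <| Subgroup.normalClosure_le_normal <|
    Set.singleton_subset_iff.mpr torToVonDyck_central

def qX (k n m : ℕ) (i : ZMod n) : TorQuot k n m := tx k n m i

def qDelta (k n m : ℕ) : TorQuot k n m := txProd k n m m 1

/-- `δ^B` for the Bézout coefficient `B` in `n A + m B = 1`; it plays the role of `b`. -/
def qB (k n m : ℕ) : TorQuot k n m := qDelta k n m ^ Nat.gcdB n m

theorem qX_pow_eq_one (i : ZMod n) : qX k n m i ^ k = 1 := by
  rw [qX, ← QuotientGroup.mk_pow, tx_pow_eq_one, QuotientGroup.mk_one]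

theorem qDelta_pow_eq_one : qDelta k n m ^ n = 1 := by
  rw [qDelta, ← QuotientGroup.mk_pow, ← txProd_pow_eq_txProd_pow, QuotientGroup.eq_one_iff]
  exact Subgroup.subset_normalClosure rfl

theorem qX_mul_qDelta (i : ZMod n) :
    qX k n m i * qDelta k n m = qDelta k n m * qX k n m (i + m) :=
  congrArg QuotientGroup.mk (tx_mul_txProd i)

theorem qX_mul_qB (hco : n.Coprime m) (i : ZMod n) :
    qX k n m i * qB k n m = qB k n m * qX k n m (i + 1) := by
  have h :=
    mul_zpow_eq_zpow_mul_of_shift (qX_mul_qDelta (k := k) (n := n) (m := m)) (Nat.gcdB n m) i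
  rwa [zsmul_eq_mul, hco.intCast_gcdB_mul_eq_one] at h

theorem qB_pow_eq_one : qB k n m ^ n = 1 := by
  rw [qB, ← zpow_natCast, ← zpow_mul, mul_comm, zpow_mul, zpow_natCast, qDelta_pow_eq_one,
    one_zpow]

theorem qB_pow_eq_qDelta (hco : n.Coprime m) : qB k n m ^ m = qDelta k n m := by
  rw [qB, ← zpow_natCast, ← zpow_mul]
  refine (zpow_eq_zpow_of_intCast_eq (t := 1) qDelta_pow_eq_one ?_).trans (zpow_one _)
  push_cast
  exact hco.intCast_gcdB_mul_eq_one

theorem qB_mul_qX_inv_pow_eq_one (hco : n.Coprime m) :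
    (qB k n m * (qX k n m 1)⁻¹) ^ m = 1 := by
  have hprod := list_prod_map_range_of_shift (qX_mul_qB (k := k) hco) m (1 : ZMod n)
  have hdelta : ((List.range m).map fun j : ℕ => qX k n m (1 + j)).prod = qDelta k n m := by
    rw [qDelta, txProd_eq_list_prod (k := k) (m := m) m 1, ← QuotientGroup.mk'_apply,
      map_list_prod, List.map_map]
    rfl
  rw [hdelta, qB_pow_eq_qDelta hco, right_eq_mul] at hprod
  rw [← inv_inv (qB k n m * _), mul_inv_rev, inv_inv, inv_pow, hprod, inv_one]

end Quotient

section Isomorphism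

variable {k n m : ℕ}

theorem lift_qX_qB_eq_one_of_mem_vdRels (hco : n.Coprime m) :
    ∀ r ∈ vdRels k n m, FreeGroup.lift ![qX k n m 1, qB k n m] r = 1 := by
  rintro r (rfl | rfl | rfl)
  · simpa using qX_pow_eq_one 1
  · simpa using qB_pow_eq_one
  · simpa using qB_mul_qX_inv_pow_eq_one hco

def vonDyckToTorQuot (hco : n.Coprime m) : VonDyck k n m →* TorQuot k n m :=
  PresentedGroup.toGroup (lift_qX_qB_eq_one_of_mem_vdRels hco)

theorem vonDyckToTorQuot_vA (hco : n.Coprime m) :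
    vonDyckToTorQuot hco (vA k n m) = qX k n m 1 :=
  PresentedGroup.toGroup.of _

theorem vonDyckToTorQuot_vB (hco : n.Coprime m) :
    vonDyckToTorQuot hco (vB k n m) = qB k n m :=
  PresentedGroup.toGroup.of _

theorem torQuotToVonDyck_qX (i : ZMod n) : torQuotToVonDyck k n m (qX k n m i) = vX k n m i :=
  torToVonDyck_tx i

theorem torQuotToVonDyck_qDelta : torQuotToVonDyck k n m (qDelta k n m) = vB k n m ^ m :=
  torToVonDyck_txProd 1

theorem vonDyckToTorQuot_comp_torQuotToVonDyck (hco : n.Coprime m) :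
    (vonDyckToTorQuot hco).comp (torQuotToVonDyck k n m) = MonoidHom.id _ := by
  refine QuotientGroup.monoidHom_ext _ (PresentedGroup.ext fun i => ?_)
  change vonDyckToTorQuot hco (torQuotToVonDyck k n m (qX k n m i)) = qX k n m i
  rw [torQuotToVonDyck_qX, vX, map_mul, map_mul, map_zpow, map_zpow, vonDyckToTorQuot_vA,
    vonDyckToTorQuot_vB, zpow_neg_mul_mul_zpow_of_shift (qX_mul_qB (k := k) (n := n) (m := m) hco),
    zsmul_one, ZMod.intCast_zmod_cast, add_sub_cancel]

theorem torQuotToVonDyck_comp_vonDyckToTorQuot (hco : n.Coprime m) :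
    (torQuotToVonDyck k n m).comp (vonDyckToTorQuot hco) = MonoidHom.id _ := by
  refine PresentedGroup.ext fun x => ?_
  fin_cases x
  · change torQuotToVonDyck k n m (qX k n m 1) = vA k n m
    rw [torQuotToVonDyck_qX, vX_one]
  · change torQuotToVonDyck k n m (vonDyckToTorQuot hco (vB k n m)) = vB k n m
    rw [vonDyckToTorQuot_vB, qB, map_zpow, torQuotToVonDyck_qDelta, ← zpow_natCast, ← zpow_mul]
    refine (zpow_eq_zpow_of_intCast_eq (t := 1) vB_pow_eq_one ?_).trans (zpow_one _)
    push_cast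
    rw [mul_comm]
    exact hco.intCast_gcdB_mul_eq_one

def torQuotEquivVonDyck (hco : n.Coprime m) : TorQuot k n m ≃* VonDyck k n m :=
  MonoidHom.toMulEquiv _ _ (vonDyckToTorQuot_comp_torQuotToVonDyck hco)
    (torQuotToVonDyck_comp_vonDyckToTorQuot hco)

end Isomorphism

theorem stmt13_general (k n m : ℕ)
    (hco : Nat.Coprime n m) :
    ∃ φ : (TorGroup k n m ⧸ Subgroup.normalClosure {txProd k n m n 1 ^ m}) ≃*
        VonDyck k n m,
      ∀ i : ℕ,
        φ (QuotientGroup.mk (tx k n m ((i : ZMod n) + 1))) =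
          vB k n m ^ (-(i : ℤ)) * vA k n m * vB k n m ^ (i : ℤ) :=
  ⟨torQuotEquivVonDyck hco, fun i => (torQuotToVonDyck_qX _).trans
    (vX_eq_of_intCast_eq (by push_cast; ring))⟩

/-- Let `k, n, m ≥ 2` with `n < m` and `n, m` coprime.  The quotient of the toric
reflection group `W(k,n,m)` by the normal subgroup generated by `c = (x₁x₂⋯xₙ)^m` is
isomorphic to `W⁺_{k,n,m} = ⟨a, b | a^k = b^n = (ba⁻¹)^m = 1⟩`, via the map sending
`x_{i+1}` to `b^{-i} a b^{i}` (i.e. `xᵢ ↦ b^{-i+1} a b^{i-1}`). -/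
theorem stmt13 (k n m : ℕ) (hk : 2 ≤ k) (hn : 2 ≤ n) (hm : 2 ≤ m) (hnm : n < m)
    (hco : Nat.Coprime n m) :
    ∃ φ : (TorGroup k n m ⧸ Subgroup.normalClosure {txProd k n m n 1 ^ m}) ≃*
        VonDyck k n m,
      ∀ i : ℕ,
        φ (QuotientGroup.mk (tx k n m ((i : ZMod n) + 1))) =
          vB k n m ^ (-(i : ℤ)) * vA k n m * vB k n m ^ (i : ℤ) :=
  stmt13_general k n m hco
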